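/- arXiv:2407.04759 — 5 statements merged into one kernel-verified Lean document; each statement's English description precedes it below -/
import Mathlib

section
/- Let $n \ge m+1 \ge 2$ be integers and define $\alpha_j = \binom{n}{j}$ for $0 \le j \le m$ and $\alpha_j = \binom{n}{j} - \binom{n-m}{j-m}$ for $m+1 \le j \le n$. Then for all $0 \le k \le q \le n$, $\sum_{j=0}^{k} (-1)^{k-j} \binom{q-j}{k-j} \alpha_j = \binom{n-q+k-1}{k} - \binom{n-q+k-1-m}{k-m} + (-1)^{k-m}\binom{q-m}{k-m}$. -/
/-!
Upper negation turns `(-1)^i * C(r + i, i)` into the generalized binomial `C(-(r + 1), i)`, so the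
alternating sum `∑ⱼ (-1)^(k-j) C(q-j, k-j) C(N, j)` is a Chu–Vandermonde convolution and equals
`C(N - q + k - 1, k)`. Writing `α j = C(n, j) - [j > m] C(n - m, j - m)`, the first part gives
`C(n - q + k - 1, k)` and the second part, after the shift `j ↦ j - m`, is the same convolution for
`n - m, q - m, k - m` with its `j = m` term `(-1)^(k-m) C(q - m, k - m)` missing.
-/

open Finset

theorem neg_one_pow_mul_choose_add_eq_choose_neg (r i : ℕ) :
    (-1 : ℤ) ^ i * ((r + i).choose i : ℤ) = Ring.choose (-((r : ℤ) + 1)) i := by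
  rw [Ring.choose_neg, show (r : ℤ) + 1 + i - 1 = ((r + i : ℕ) : ℤ) by push_cast; ring,
    Ring.choose_natCast, Units.smul_def, Int.coe_negOnePow_natCast, smul_eq_mul]

theorem sum_neg_one_pow_mul_choose_add_mul_choose (x : ℤ) (r k : ℕ) :
    ∑ j ∈ range (k + 1),
        (-1 : ℤ) ^ (k - j) * ((r + (k - j)).choose (k - j) : ℤ) * Ring.choose x j
      = Ring.choose (x - r - 1) k := by
  rw [show x - r - 1 = x + -((r : ℤ) + 1) by ring, Ring.add_choose_eq k (Commute.all _ _),
    Finset.Nat.sum_antidiagonal_eq_sum_range_succ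
      (fun i j => Ring.choose x i * Ring.choose (-((r : ℤ) + 1)) j)]
  refine sum_congr rfl fun j _ => ?_
  rw [← neg_one_pow_mul_choose_add_eq_choose_neg]
  ring

theorem sum_neg_one_pow_mul_choose_sub_mul_choose {N q k : ℕ} (hkq : k ≤ q) (hqN : q ≤ N) :
    ∑ j ∈ range (k + 1), (-1 : ℤ) ^ (k - j) * ((q - j).choose (k - j) : ℤ) * (N.choose j : ℤ)
      = ((N - q + k - 1).choose k : ℤ) := by
  calc _ = ∑ j ∈ range (k + 1),
          (-1 : ℤ) ^ (k - j) * ((q - k + (k - j)).choose (k - j) : ℤ) * Ring.choose (N : ℤ) j :=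
        sum_congr rfl fun j hj => by
          rw [Ring.choose_natCast, show q - k + (k - j) = q - j by grind]
    _ = Ring.choose ((N : ℤ) - (q - k : ℕ) - 1) k := sum_neg_one_pow_mul_choose_add_mul_choose ..
    _ = _ := by
      rcases Nat.eq_zero_or_pos k with rfl | hk
      · simp
      · rw [show (N : ℤ) - (q - k : ℕ) - 1 = ((N - q + k - 1 : ℕ) : ℤ) by omega,
          Ring.choose_natCast]

theorem sum_neg_one_pow_mul_choose_sub_mul_shifted_choose {n m q k : ℕ} (hmk : m ≤ k)
    (hkq : k ≤ q) (hqn : q ≤ n) :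
    ∑ j ∈ range (k + 1), (-1 : ℤ) ^ (k - j) * ((q - j).choose (k - j) : ℤ) *
        (if j ≤ m then 0 else ((n - m).choose (j - m) : ℤ))
      = ((n - q + k - 1 - m).choose (k - m) : ℤ)
        - (-1 : ℤ) ^ (k - m) * ((q - m).choose (k - m) : ℤ) := by
  obtain ⟨K, rfl⟩ := Nat.exists_eq_add_of_le hmk
  have hcore := sum_neg_one_pow_mul_choose_sub_mul_choose (N := n - m) (q := q - m) (k := K)
    (by omega) (by omega)
  rw [sum_range_succ', Nat.choose_zero_right, Nat.cast_one, mul_one, Nat.sub_zero, Nat.sub_zero,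
    show n - m - (q - m) + K - 1 = n - q + (m + K) - 1 - m by omega] at hcore
  rw [Nat.add_sub_cancel_left, ← hcore, add_sub_cancel_right,
    show m + K + 1 = m + (K + 1) by ring, sum_range_add, sum_range_succ',
    sum_eq_zero fun j hj => by rw [if_pos (mem_range.1 hj).le, mul_zero]]
  simp only [le_refl, if_true, mul_zero, add_zero, zero_add]
  refine sum_congr rfl fun i _ => ?_
  rw [if_neg (by omega), show m + K - (m + (i + 1)) = K - (i + 1) by omega,
    show q - (m + (i + 1)) = q - m - (i + 1) by omega, show m + (i + 1) - m = i + 1 by omega]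

theorem stmt1_general (n m : ℕ)
    (α : ℕ → ℤ)
    (hα : ∀ j, α j = if j ≤ m then (n.choose j : ℤ)
      else (n.choose j : ℤ) - ((n - m).choose (j - m) : ℤ))
    (q k : ℕ) (hkq : k ≤ q) (hqn : q ≤ n) :
    ∑ j ∈ Finset.range (k + 1),
      (-1 : ℤ) ^ (k - j) * ((q - j).choose (k - j) : ℤ) * α j
      = ((n - q + k - 1).choose k : ℤ) - ((n - q + k - 1 - m).choose (k - m) : ℤ)
        + (-1 : ℤ) ^ (k - m) * ((q - m).choose (k - m) : ℤ) := by
  have hα_sub : ∀ j,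
      α j = (n.choose j : ℤ) - if j ≤ m then 0 else ((n - m).choose (j - m) : ℤ) := by
    intro j
    rw [hα j]
    split_ifs <;> ring
  simp only [hα_sub, mul_sub, sum_sub_distrib, sum_neg_one_pow_mul_choose_sub_mul_choose hkq hqn]
  rcases le_total m k with hmk | hkm
  · rw [sum_neg_one_pow_mul_choose_sub_mul_shifted_choose hmk hkq hqn]
    ring
  · rw [sum_eq_zero fun j hj => by grind, Nat.sub_eq_zero_of_le hkm]
    simp

theorem stmt1 (n m : ℕ) (hm : 1 ≤ m) (hn : m + 1 ≤ n)
    (α : ℕ → ℤ)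
    (hα : ∀ j, α j = if j ≤ m then (n.choose j : ℤ)
      else (n.choose j : ℤ) - ((n - m).choose (j - m) : ℤ))
    (q k : ℕ) (hkq : k ≤ q) (hqn : q ≤ n) :
    ∑ j ∈ Finset.range (k + 1),
      (-1 : ℤ) ^ (k - j) * ((q - j).choose (k - j) : ℤ) * α j
      = ((n - q + k - 1).choose k : ℤ) - ((n - q + k - 1 - m).choose (k - m) : ℤ)
        + (-1 : ℤ) ^ (k - m) * ((q - m).choose (k - m) : ℤ) :=
  stmt1_general n m α hα q k hkq hqn
end

section
/- Define $f_k(x) = \binom{x}{k} - 2\binom{x}{k-1}$ for $2 \le k \le 6$. For all integers $n \ge 16$, $f_6(n) - (f_6(n-1) + f_5(n-2) + f_4(n-3) + f_3(n-4) + f_2(n-5)) = n - 7 \ge 0$. -/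
/-!
Peeling off one application of Pascal's rule at a time along a diagonal of Pascal's triangle
gives `C(m+5, b+5) = C(m+4, b+5) + C(m+3, b+4) + C(m+2, b+3) + C(m+1, b+2) + C(m, b+1) + C(m, b)`.
With `n = m + 5`, the `C(·, k)` parts of the `f_k` collapse to `C(m, 1) = m` (take `b = 1`)
and the `C(·, k-1)` parts to `C(m, 0) = 1` (take `b = 0`), leaving `m - 2 = n - 7`.
-/

open Finset

theorem Nat.choose_add_add_eq_choose_add_sum (a b j : ℕ) :
    (a + j).choose (b + j) = a.choose b + ∑ i ∈ range j, (a + i).choose (b + i + 1) := by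
  induction j with
  | zero => simp
  | succ j ih =>
    rw [sum_range_succ, ← add_assoc (a.choose b), ← ih, ← add_assoc a, ← add_assoc b,
      Nat.choose_succ_succ']

theorem Nat.choose_add_five_sub_diagonal (m b : ℕ) :
    ((m + 5).choose (b + 5) : ℤ) - ((m + 4).choose (b + 5) + (m + 3).choose (b + 4)
      + (m + 2).choose (b + 3) + (m + 1).choose (b + 2) + m.choose (b + 1)) = m.choose b := by
  rw [Nat.choose_add_add_eq_choose_add_sum m b 5]
  simp only [sum_range_succ, sum_range_zero]
  push_cast
  ring_nf

theorem stmt8 (f : ℕ → ℕ → ℤ)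
    (hf : ∀ k, 2 ≤ k → k ≤ 6 → ∀ x, f k x = (x.choose k : ℤ) - 2 * (x.choose (k - 1) : ℤ)) :
    ∀ n : ℕ, 16 ≤ n →
      f 6 n - (f 6 (n - 1) + f 5 (n - 2) + f 4 (n - 3) + f 3 (n - 4) + f 2 (n - 5))
        = (n : ℤ) - 7 ∧ (0 : ℤ) ≤ (n : ℤ) - 7 := by
  intro n hn
  obtain ⟨m, rfl⟩ : ∃ m, n = m + 5 := ⟨n - 5, by omega⟩
  refine ⟨?_, by omega⟩
  have top := Nat.choose_add_five_sub_diagonal m 1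
  have bottom := Nat.choose_add_five_sub_diagonal m 0
  simp only [hf 6 (by norm_num) le_rfl, hf 5 (by norm_num) (by norm_num),
    hf 4 (by norm_num) (by norm_num), hf 3 (by norm_num) (by norm_num),
    hf 2 le_rfl (by norm_num), Nat.choose_one_right, Nat.choose_zero_right,
    show m + 5 - 1 = m + 4 by omega, show m + 5 - 2 = m + 3 by omega,
    show m + 5 - 3 = m + 2 by omega, show m + 5 - 4 = m + 1 by omega,
    show m + 5 - 5 = m by omega] at top bottom ⊢
  push_cast at top bottom ⊢
  linarith
end

section
/- Define $f_k(x) = \binom{x}{k} - \binom{x}{k-1}$ for $2 \le k \le 7$. For all integers $n \ge 13$, $f_7(n) - (f_7(n-1) + f_6(n-2) + f_5(n-3) + f_4(n-4) + f_3(n-5) + f_2(n-6)) = n - 7 \ge 0$. -/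
/-! Each `f k` satisfies the Pascal-type recursion `f (k+1) (x+1) = f (k+1) x + f k x`, so the
subtracted terms telescope: `f 7 n - f 7 (n-1) = f 6 (n-1)`, then `f 6 (n-1) - f 6 (n-2) = f 5 (n-2)`,
and so on down to `f 2 (n-5) - f 2 (n-6) = (n-6).choose 1 - (n-6).choose 0 = n - 7`. -/

theorem Nat.cast_choose_sub_choose_succ (x k : ℕ) :
    ((x + 1).choose (k + 2) : ℤ) - (x + 1).choose (k + 1) =
      (x.choose (k + 2) - x.choose (k + 1)) + (x.choose (k + 1) - x.choose k) := by
  simp only [Nat.choose_succ_succ, Nat.cast_add]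
  ring

theorem stmt9 (f : ℕ → ℕ → ℤ)
    (hf : ∀ k, 2 ≤ k → k ≤ 7 → ∀ x, f k x = (x.choose k : ℤ) - (x.choose (k - 1) : ℤ)) :
    ∀ n : ℕ, 13 ≤ n →
      f 7 n - (f 7 (n - 1) + f 6 (n - 2) + f 5 (n - 3) + f 4 (n - 4) + f 3 (n - 5) + f 2 (n - 6))
        = (n : ℤ) - 7 ∧ (0 : ℤ) ≤ (n : ℤ) - 7 := by
  intro n hn
  obtain ⟨x, rfl⟩ : ∃ x, n = x + 7 := ⟨n - 7, by omega⟩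
  simp (disch := norm_num) only [hf, Nat.reduceSubDiff, Nat.cast_add, Nat.cast_ofNat]
  refine ⟨?_, by omega⟩
  have base : ((x + 1).choose 1 : ℤ) - (x + 1).choose 0 = x := by simp
  linear_combination base + Nat.cast_choose_sub_choose_succ (x + 6) 5
    + Nat.cast_choose_sub_choose_succ (x + 5) 4 + Nat.cast_choose_sub_choose_succ (x + 4) 3
    + Nat.cast_choose_sub_choose_succ (x + 3) 2 + Nat.cast_choose_sub_choose_succ (x + 2) 1
    + Nat.cast_choose_sub_choose_succ (x + 1) 0
end

section
/- Let $n \ge 10$ and suppose $\alpha_3 = \binom{n_3}{3} + \binom{n_2}{2} + \binom{n_1}{1}$ with $n > n_3 > n_2 > n_1 \ge 0$ and $n_3 \ge n-2$, and $\alpha_4 \le \binom{n_3}{4} + \binom{n_2}{3} + \binom{n_1}{2}$. Then $3\alpha_4 - 4\alpha_3 \le 3\binom{n}{4} - 4\binom{n}{3}$. -/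
/-!
Let `g k m = 3 C(m, k+1) - 4 C(m, k)` (`cascadeTerm k m`): the contribution to `3α₄ - 4α₃` of
the cascade term `C(m, k)` of `α₃` together with its Kruskal–Katona bound `C(m, k+1)` on `α₄`.
Pascal's rule gives `g (k+1) (m+1) = g (k+1) m + g k m`, so `g 3 n = g 3 (n-1) + g 2 (n-1)`
`= g 3 (n-2) + g 2 (n-2) + g 2 (n-1)`. On `[0, M]` the sequences `g 1` and `g 2` are maximal at `M`
once `M ≥ 4`, resp. `M ≥ 6`; hence `g 2 n₂ + g 1 n₁ ≤ g 2 (k+1)` whenever `n₂, n₁ ≤ k`, which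
absorbs the two lower cascade terms both when `n₃ = n-1` and when `n₃ = n-2`.
-/

def cascadeTerm (k m : ℕ) : ℤ := 3 * m.choose (k + 1) - 4 * m.choose k

lemma cascadeTerm_succ_succ (k m : ℕ) :
    cascadeTerm (k + 1) (m + 1) = cascadeTerm (k + 1) m + cascadeTerm k m := by
  simp only [cascadeTerm, Nat.choose_succ_succ, Nat.cast_add]
  ring

lemma apply_le_apply_of_monotoneOn_Ici {α : Type*} [Preorder α] {f : ℕ → α} {t x M : ℕ}
    (hlow : ∀ m ≤ t, f m ≤ f t) (hstep : ∀ m ≥ t, f m ≤ f (m + 1)) (hxM : x ≤ M) (htM : t ≤ M) :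
    f x ≤ f M := by
  have hmono := monotoneOn_nat_Ici_of_le_succ hstep
  rcases le_total x t with hxt | htx
  · exact (hlow x hxt).trans (hmono (Set.mem_Ici.2 le_rfl) (Set.mem_Ici.2 htM) htM)
  · exact hmono (Set.mem_Ici.2 htx) (Set.mem_Ici.2 htM) hxM

lemma cascadeTerm_one_le {x M : ℕ} (hxM : x ≤ M) (hM : 4 ≤ M) :
    cascadeTerm 1 x ≤ cascadeTerm 1 M := by
  refine apply_le_apply_of_monotoneOn_Ici (t := 4) ?_ (fun m hm => ?_) hxM hM
  · decide
  · rw [cascadeTerm_succ_succ 0 m, le_add_iff_nonneg_right]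
    simp only [cascadeTerm, zero_add, Nat.choose_one_right, Nat.choose_zero_right]
    omega

lemma cascadeTerm_two_le {x M : ℕ} (hxM : x ≤ M) (hM : 6 ≤ M) :
    cascadeTerm 2 x ≤ cascadeTerm 2 M := by
  refine apply_le_apply_of_monotoneOn_Ici (t := 6) ?_ (fun m hm => ?_) hxM hM
  · decide
  · rw [cascadeTerm_succ_succ 1 m, le_add_iff_nonneg_right]
    exact cascadeTerm_one_le (Nat.zero_le m) (by omega)

lemma cascadeTerm_two_nonneg {M : ℕ} (hM : 6 ≤ M) : 0 ≤ cascadeTerm 2 M :=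
  cascadeTerm_two_le (Nat.zero_le M) hM

lemma cascadeTerm_two_add_one_le {k n₂ n₁ : ℕ} (hk : 6 ≤ k) (hn₂ : n₂ ≤ k) (hn₁ : n₁ ≤ k) :
    cascadeTerm 2 n₂ + cascadeTerm 1 n₁ ≤ cascadeTerm 2 (k + 1) := by
  rw [cascadeTerm_succ_succ 1 k]
  exact add_le_add (cascadeTerm_two_le hn₂ hk) (cascadeTerm_one_le hn₁ (by omega))

theorem stmt10 (n n3 n2 n1 : ℕ) (hn : 10 ≤ n)
    (h1 : n3 < n) (h2 : n2 < n3) (h3 : n1 < n2) (h4 : n - 2 ≤ n3)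
    (α3 α4 : ℤ)
    (hα3 : α3 = (n3.choose 3 : ℤ) + (n2.choose 2 : ℤ) + (n1.choose 1 : ℤ))
    (hα4 : α4 ≤ (n3.choose 4 : ℤ) + (n2.choose 3 : ℤ) + (n1.choose 2 : ℤ)) :
    3 * α4 - 4 * α3 ≤ 3 * (n.choose 4 : ℤ) - 4 * (n.choose 3 : ℤ) := by
  have hcascade : 3 * α4 - 4 * α3 ≤ cascadeTerm 3 n3 + cascadeTerm 2 n2 + cascadeTerm 1 n1 := by
    simp only [cascadeTerm]
    linarith
  change _ ≤ cascadeTerm 3 n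
  obtain ⟨m, rfl⟩ : ∃ m, n = m + 3 := ⟨n - 3, by omega⟩
  have hsplit₁ := cascadeTerm_succ_succ 2 (m + 2)
  have hsplit₂ := cascadeTerm_succ_succ 2 (m + 1)
  obtain rfl | rfl : n3 = m + 2 ∨ n3 = m + 1 := by omega
  · have hlower : cascadeTerm 2 n2 + cascadeTerm 1 n1 ≤ cascadeTerm 2 (m + 2) :=
      cascadeTerm_two_add_one_le (by omega) (by omega) (by omega)
    linarith
  · have hlower : cascadeTerm 2 n2 + cascadeTerm 1 n1 ≤ cascadeTerm 2 (m + 1) :=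
      cascadeTerm_two_add_one_le (by omega) (by omega) (by omega)
    have hlast : 0 ≤ cascadeTerm 2 (m + 2) := cascadeTerm_two_nonneg (by omega)
    linarith
end

section
/- Let $n \ge 10$ and suppose $\alpha_2 = \binom{n_2}{2} + \binom{n_1}{1}$ with $n > n_2 > n_1 \ge 0$ and $n_2 \ge n-2$, and $\alpha_3 \le \binom{n_2}{3} + \binom{n_1}{2}$. Then $6\alpha_3 - 10\alpha_2 \le 6\binom{n}{3} - 10\binom{n}{2}$. -/
/-!
Write `w k x = 6 C(x, k+1) - 10 C(x, k)`; the hypotheses give `6α₃ - 10α₂ ≤ w 2 n₂ + w 1 n₁`,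
and the goal is `w 2 n`.
Pascal's rule gives `w (k+1) (x+1) = w (k+1) x + w k x`, with `w 0 x = 6x - 10` and
`w 1 x = x(3x - 13)`. Hence `w 1 a ≤ w 1 b` whenever `a ≤ b` and `5 ≤ b`, `w 1` is nonnegative
from `x = 5` on, so `w 2` is increasing there, and `w 2 (m+1) + w 1 m = w 2 (m+2) - w 0 m ≤ w 2 (m+2)` for `m ≥ 2`.
With `n₂ = m + 1` and `n₁ ≤ m`, this gives
`w 2 n₂ + w 1 n₁ ≤ w 2 (m+1) + w 1 m ≤ w 2 (m+2) ≤ w 2 n`.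
-/

def weightedChoose (k x : ℕ) : ℤ := 6 * x.choose (k + 1) - 10 * x.choose k

namespace weightedChoose

lemma succ_succ (k x : ℕ) :
    weightedChoose (k + 1) (x + 1) = weightedChoose (k + 1) x + weightedChoose k x := by
  simp only [weightedChoose, Nat.choose_succ_succ', Nat.cast_add]
  ring

lemma zero_eq (x : ℕ) : weightedChoose 0 x = 6 * x - 10 := by
  simp [weightedChoose]

lemma one_eq (x : ℕ) : weightedChoose 1 x = x * (3 * x - 13) := by
  induction x with
  | zero => simp [weightedChoose]
  | succ x ih =>
    rw [succ_succ, ih, zero_eq]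
    push_cast
    ring

lemma one_nonneg {x : ℕ} (hx : 5 ≤ x) : 0 ≤ weightedChoose 1 x := by
  rw [one_eq]
  have : (5 : ℤ) ≤ x := by exact_mod_cast hx
  nlinarith

lemma one_le_one {a b : ℕ} (hab : a ≤ b) (hb : 5 ≤ b) :
    weightedChoose 1 a ≤ weightedChoose 1 b := by
  rw [one_eq, one_eq]
  have hab' : (a : ℤ) ≤ b := by exact_mod_cast hab
  have hb' : (5 : ℤ) ≤ b := by exact_mod_cast hb
  nlinarith [Int.natCast_nonneg a]

lemma two_le_two {a b : ℕ} (ha : 5 ≤ a) (hab : a ≤ b) :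
    weightedChoose 2 a ≤ weightedChoose 2 b := by
  induction b, hab using Nat.le_induction with
  | base => rfl
  | succ b hab ih =>
    rw [succ_succ]
    linarith [one_nonneg (ha.trans hab)]

lemma two_succ_add_one_le {m : ℕ} (hm : 2 ≤ m) :
    weightedChoose 2 (m + 1) + weightedChoose 1 m ≤ weightedChoose 2 (m + 2) := by
  have hm' : (2 : ℤ) ≤ m := by exact_mod_cast hm
  rw [succ_succ 1 (m + 1), succ_succ 0 m, zero_eq]
  linarith

end weightedChoose

open weightedChoose in
theorem stmt14 (n n2 n1 : ℕ) (hn : 10 ≤ n)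
    (h1 : n2 < n) (h2 : n1 < n2) (h3 : n - 2 ≤ n2)
    (α2 α3 : ℤ)
    (hα2 : α2 = (n2.choose 2 : ℤ) + (n1.choose 1 : ℤ))
    (hα3 : α3 ≤ (n2.choose 3 : ℤ) + (n1.choose 2 : ℤ)) :
    6 * α3 - 10 * α2 ≤ 6 * (n.choose 3 : ℤ) - 10 * (n.choose 2 : ℤ) := by
  obtain ⟨m, rfl⟩ : ∃ m, n2 = m + 1 := Nat.exists_eq_succ_of_ne_zero (by omega)
  have hα : 6 * α3 - 10 * α2 ≤ weightedChoose 2 (m + 1) + weightedChoose 1 n1 := by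
    simp only [weightedChoose, hα2]
    linarith
  calc 6 * α3 - 10 * α2
      ≤ weightedChoose 2 (m + 1) + weightedChoose 1 m := by
        linarith [one_le_one (Nat.le_of_lt_succ h2) (by omega : 5 ≤ m)]
    _ ≤ weightedChoose 2 (m + 2) := two_succ_add_one_le (by omega)
    _ ≤ weightedChoose 2 n := two_le_two (by omega) (by omega)
end
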